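/- Let G : F_{p^n} → F_{p^n} be a function whose restriction to C_d = {x^d : x ∈ F_{p^n}} is injective, where gcd(d, p^n-1) = e ≥ 2. Then the function F(x) = G(x^d) is zero-difference (e-1)-balanced: for every nonzero a ∈ F_{p^n}, the equation F(x+a) = F(x) has exactly e-1 solutions. -/

import Mathlib

/-!
Injectivity of `G` on the `d`-th powers turns `F(x + a) = F(x)` into `(x + a)^d = x^d`. For
`a ≠ 0` such an `x` is nonzero, and `x ↦ (x + a)/x` (inverse `u ↦ a/(u - 1)`) matches these
solutions with the `d`-th roots of unity other than `1`. The cyclic group `K^×` of order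
`q - 1` contains exactly `gcd(d, q - 1)` of the `d`-th roots of unity.
-/

open Finset

theorem FiniteField.card_filter_pow_eq_one {K : Type*} [Field K] [Fintype K] [DecidableEq K]
    {d : ℕ} (hd : d ≠ 0) : #{u : K | u ^ d = 1} = Nat.gcd d (Fintype.card K - 1) := by
  have : NeZero d := ⟨hd⟩
  calc #{u : K | u ^ d = 1}
      = Nat.card {u : K // u ∈ Polynomial.nthRoots d (1 : K)} := by
        rw [Nat.card_eq_fintype_card, ← Fintype.card_subtype]
        exact Fintype.card_congr (Equiv.subtypeEquivRight fun u =>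
          (Polynomial.mem_nthRoots (Nat.pos_of_ne_zero hd)).symm)
    _ = Nat.card (powMonoidHom d : Kˣ →* Kˣ).ker :=
        (Nat.card_congr (rootsOfUnityEquivNthRoots K d)).symm
    _ = Nat.gcd d (Fintype.card K - 1) := by
        rw [IsCyclic.card_powMonoidHom_ker, Nat.card_eq_fintype_card, Fintype.card_units,
          Nat.gcd_comm]

theorem card_filter_add_pow_eq_pow {K : Type*} [Field K] [Fintype K] [DecidableEq K]
    {a : K} (ha : a ≠ 0) {d : ℕ} (hd : d ≠ 0) :
    #{x : K | (x + a) ^ d = x ^ d} = #{u : K | u ^ d = 1} - 1 := by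
  have hx0 : ∀ x : K, (x + a) ^ d = x ^ d → x ≠ 0 := by
    rintro x hx rfl
    simp [zero_pow hd, ha] at hx
  have shift : ∀ u : K, u ≠ 1 → a / (u - 1) + a = u * (a / (u - 1)) := by
    intro u hu
    field_simp [sub_ne_zero.2 hu]
    ring
  rw [← card_erase_of_mem (s := {u : K | u ^ d = 1}) (a := 1) (by simp)]
  refine card_bij' (fun x _ => (x + a) / x) (fun u _ => a / (u - 1)) ?_ ?_ ?_ ?_ <;>
    simp only [mem_erase, mem_filter, mem_univ, true_and]
  · intro x hx
    refine ⟨fun h => ha ?_, by rw [div_pow, hx, div_self (pow_ne_zero _ (hx0 x hx))]⟩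
    linear_combination (div_eq_one_iff_eq (hx0 x hx)).1 h
  · rintro u ⟨hu, hud⟩
    rw [shift u hu, mul_pow, hud, one_mul]
  · intro x hx
    rw [add_div, div_self (hx0 x hx), add_sub_cancel_left, div_div_cancel₀ ha]
  · rintro u ⟨hu, -⟩
    rw [shift u hu, mul_div_assoc, div_self (div_ne_zero ha (sub_ne_zero.2 hu)), mul_one]

theorem stmt4_general (p n d : ℕ) (hd : 0 < d)
    (K : Type) [Field K] [Fintype K] [DecidableEq K]
    (hcard : Fintype.card K = p ^ n)
    (e : ℕ) (he : e = Nat.gcd d (p ^ n - 1))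
    (G : K → K)
    (hinj : Set.InjOn G {y : K | ∃ x : K, y = x ^ d}) :
    ∀ a : K, a ≠ 0 →
      (Finset.univ.filter (fun x : K => G ((x + a) ^ d) = G (x ^ d))).card = e - 1 := by
  intro a ha
  have hG : ∀ x : K, G ((x + a) ^ d) = G (x ^ d) ↔ (x + a) ^ d = x ^ d := fun x =>
    hinj.eq_iff ⟨x + a, rfl⟩ ⟨x, rfl⟩
  rw [filter_congr fun x _ => hG x, card_filter_add_pow_eq_pow ha hd.ne',
    FiniteField.card_filter_pow_eq_one hd.ne', hcard, he]

theorem stmt4 (p n d : ℕ) (hp : p.Prime) (hn : 0 < n) (hd : 0 < d)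
    (K : Type) [Field K] [Fintype K] [DecidableEq K]
    (hcard : Fintype.card K = p ^ n)
    (e : ℕ) (he : e = Nat.gcd d (p ^ n - 1)) (he2 : 2 ≤ e)
    (G : K → K)
    (hinj : Set.InjOn G {y : K | ∃ x : K, y = x ^ d}) :
    ∀ a : K, a ≠ 0 →
      (Finset.univ.filter (fun x : K => G ((x + a) ^ d) = G (x ^ d))).card = e - 1 :=
  stmt4_general p n d hd K hcard e he G hinj
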